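/- arXiv:1307.7522 — 2 statements merged into one kernel-verified Lean document; each statement's English description precedes it below -/
import Mathlib

section
/- Let k be a natural number. The separating variety V_sep is connected in codimension k if and only if X is connected in codimension k and G is generated by k-reflections. -/
/-!
Every point `(x, y)` of `V_sep` has `y = σ x` for some `σ ∈ G`: the invariant
`z ↦ ∏ σ, q (σ z)` separates `x` from `y` when `q` vanishes at `x` and is `1` on the orbit of `y`.
So `V_sep` is the union of the graphs `H_σ = {(x, σ x)}`, closed copies of `X` on which the first
projection is inverse to `x ↦ (x, σ x)`. An irreducible closed subset of `V_sep` lies in a single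
graph, so the codimension of `B ⊆ V_sep` is the least codimension of its pullbacks to `X`.

If `X` is connected in codimension `k`, then each `H_σ \ B` is connected, and `H_σ \ B` meets
`H_{σ s} \ B` whenever `s` is a `k`-reflection, since `X^s` cannot lie in the pullback of `B`;
generation by `k`-reflections links all the pieces. Conversely, the pairs with a coordinate in `A`
form a subset of `V_sep` of the same codimension as `A`, whose complement projects onto `X \ A`;
and if the `k`-reflections generate a proper subgroup `N`, removing the pairs over the fixed loci
of the elements outside `N` (codimension `> k`) separates the graphs of `N` from the others.
-/

open TopologicalSpace

/-- The chain-theoretic codimension of `A` inside `Y`: the infimum, over all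
irreducible closed subsets `Z` of `Y` contained in `A`, of the coheight of `Z`
in the poset of irreducible closed subsets of `Y`. -/
noncomputable def codimIn {α : Type*} [TopologicalSpace α] (Y A : Set α) : ℕ∞ :=
  ⨅ (Z : IrreducibleCloseds ↥Y) (_ : (Z : Set ↥Y) ⊆ (Subtype.val ⁻¹' A)), Order.coheight Z

/-- `Y` is connected in codimension `k`: removing any closed subset of
codimension `> k` leaves a connected set. -/
def ConnectedInCodim {α : Type*} [TopologicalSpace α] (Y : Set α) (k : ℕ∞) : Prop :=
  ∀ A : Set α, IsClosed A → k < codimIn Y A → IsConnected (Y \ A)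

/-- `Z` is an irreducible component of `Y` (a maximal irreducible subset of `Y`). -/
def IsIrredCompOf {α : Type*} [TopologicalSpace α] (Z Y : Set α) : Prop :=
  Maximal (fun S => S ⊆ Y ∧ IsIrreducible S) Z

variable {K : Type*} [Field K]

/-- The Zariski topology on affine space `σ → K`. -/
instance zariskiTopology (σ : Type*) : TopologicalSpace (σ → K) :=
  .generateFrom {U | ∃ I : Ideal (MvPolynomial σ K), U = (MvPolynomial.zeroLocus K I)ᶜ}

variable {m : ℕ}

/-- `f : X → K` is a regular function on `X` (the restriction of a polynomial). -/
def IsRegularFn (X : Set (Fin m → K)) (f : ↥X → K) : Prop :=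
  ∃ p : MvPolynomial (Fin m) K, ∀ x : ↥X, f x = MvPolynomial.eval (x : Fin m → K) p

variable (G : Type*) [Group G]

/-- The `G`-action on `X` is by morphisms (hence automorphisms) of varieties. -/
def IsRegularAction (X : Set (Fin m → K)) [MulAction G ↥X] : Prop :=
  ∀ (σ : G) (i : Fin m), IsRegularFn X (fun x => ((σ • x : ↥X) : Fin m → K) i)

/-- `f : X → K` is a `G`-invariant function. -/
def IsInvariantFn (X : Set (Fin m → K)) [MulAction G ↥X] (f : ↥X → K) : Prop :=
  ∀ (σ : G) (x : ↥X), f (σ • x) = f x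

/-- The separating variety `V_sep ⊆ X × X`, inside `K^m × K^m 'K^{m ⊕ m}`. -/
def sepVariety (X : Set (Fin m → K)) [MulAction G ↥X] : Set ((Fin m ⊕ Fin m) → K) :=
  {z | ∃ x y : ↥X, z = Sum.elim (x : Fin m → K) (y : Fin m → K) ∧
    ∀ f : ↥X → K, IsRegularFn X f → IsInvariantFn G X f → f x = f y}

/-- `X × X` inside `K^{m ⊕ m}`. -/
def prodXX (X : Set (Fin m → K)) : Set ((Fin m ⊕ Fin m) → K) :=
  {z | ∃ x ∈ X, ∃ y ∈ X, z = Sum.elim x y}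

/-- The graph `H_{σ,Y} = {(x, σx) | x ∈ Y}` of `σ` over a subset `Y ⊆ X`. -/
def graphComp (X : Set (Fin m → K)) [MulAction G ↥X] (σ : G) (Y : Set (Fin m → K)) :
    Set ((Fin m ⊕ Fin m) → K) :=
  {z | ∃ x : ↥X, (x : Fin m → K) ∈ Y ∧
    z = Sum.elim (x : Fin m → K) ((σ • x : ↥X) : Fin m → K)}

/-- The fixed-point set `X^σ`, as a subset of the ambient affine space. -/
def fixedPts (X : Set (Fin m → K)) [MulAction G ↥X] (σ : G) : Set (Fin m → K) :=
  {v | ∃ h : v ∈ X, σ • (⟨v, h⟩ : ↥X) = ⟨v, h⟩}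

/-- A set `S` of functions on `X` separates as well as all invariants do. -/
def IsSeparating (X : Set (Fin m → K)) [MulAction G ↥X] (S : Set (↥X → K)) : Prop :=
  ∀ x y : ↥X, (∃ f : ↥X → K, IsRegularFn X f ∧ IsInvariantFn G X f ∧ f x ≠ f y) →
    ∃ g ∈ S, g x ≠ g y

/-- A regular (polynomial) map between algebraic sets. -/
def IsRegularMap {α β : Type*} (A : Set (α → K)) (B : Set (β → K)) (φ : ↥A → ↥B) : Prop :=
  ∀ j : β, ∃ p : MvPolynomial α K, ∀ x : ↥A, (φ x : β → K) j = MvPolynomial.eval (x : α → K) p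

/-- Isomorphism of algebraic sets (mutually inverse regular maps). -/
def VarIso {α β : Type*} (A : Set (α → K)) (B : Set (β → K)) : Prop :=
  ∃ (φ : ↥A → ↥B) (ψ : ↥B → ↥A), IsRegularMap A B φ ∧ IsRegularMap B A ψ ∧
    Function.LeftInverse ψ φ ∧ Function.RightInverse ψ φ

open Set Topology Relation MulAction

section Codim

variable {T : Type*} [TopologicalSpace T]

noncomputable def codim (S : Set T) : ℕ∞ :=
  ⨅ (Z : IrreducibleCloseds T) (_ : (Z : Set T) ⊆ S), Order.coheight Z

theorem codimIn_eq_codim {α : Type*} [TopologicalSpace α] (Y A : Set α) :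
    codimIn Y A = codim (Subtype.val ⁻¹' A : Set Y) :=
  rfl

theorem codim_anti : Antitone (codim : Set T → ℕ∞) := fun _ _ h =>
  le_iInf₂ fun Z hZ => iInf₂_le Z (hZ.trans h)

theorem IsIrreducible.exists_subset_of_subset_iUnion {ι : Type*} [Finite ι] {s : Set T}
    {Z : ι → Set T} (hs : IsIrreducible s) (hZ : ∀ i, IsClosed (Z i)) (h : s ⊆ ⋃ i, Z i) :
    ∃ i, s ⊆ Z i := by
  classical
  cases nonempty_fintype ι
  obtain ⟨z, hz, hsz⟩ := isIrreducible_iff_sUnion_isClosed.mp hs (Finset.univ.image Z)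
    (by simpa using hZ) (by simpa using h)
  obtain ⟨i, -, rfl⟩ := Finset.mem_image.mp hz
  exact ⟨i, hsz⟩

theorem codim_iUnion {ι : Type*} [Finite ι] {S : ι → Set T} (hS : ∀ i, IsClosed (S i)) :
    codim (⋃ i, S i) = ⨅ i, codim (S i) := by
  refine le_antisymm (le_iInf fun i => codim_anti (subset_iUnion S i)) (le_iInf₂ fun Z hZ => ?_)
  obtain ⟨i, hi⟩ := Z.isIrreducible.exists_subset_of_subset_iUnion hS hZ
  exact (iInf_le _ i).trans (iInf₂_le Z hi)

theorem codim_union {S S' : Set T} (hS : IsClosed S) (hS' : IsClosed S') :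
    codim (S ∪ S') = min (codim S) (codim S') := by
  rw [union_eq_iUnion, codim_iUnion (Bool.forall_bool.mpr ⟨hS', hS⟩), iInf_bool_eq]
  rfl

end Codim

def ConnectedSpaceInCodim (T : Type*) [TopologicalSpace T] (k : ℕ∞) : Prop :=
  ∀ C : Set T, IsClosed C → k < codim C → IsConnected Cᶜ

theorem Topology.IsInducing.isConnected_image {α β : Type*} [TopologicalSpace α]
    [TopologicalSpace β] {f : α → β} (hf : IsInducing f) {s : Set α} :
    IsConnected (f '' s) ↔ IsConnected s := by
  rw [IsConnected, IsConnected, image_nonempty, hf.isPreconnected_image]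

theorem connectedInCodim_iff {α : Type*} [TopologicalSpace α] {Y : Set α} {k : ℕ∞} :
    ConnectedInCodim Y k ↔ ConnectedSpaceInCodim Y k := by
  have hdiff (A : Set α) : Y \ A = Subtype.val '' (Subtype.val ⁻¹' A : Set Y)ᶜ := by
    rw [image_compl_preimage, Subtype.range_coe]
  simp only [ConnectedInCodim, ConnectedSpaceInCodim, hdiff, codimIn_eq_codim,
    IsInducing.subtypeVal.isConnected_image]
  refine ⟨fun h C hC hk => ?_, fun h A hA hk => h _ (hA.preimage continuous_subtype_val) hk⟩
  obtain ⟨A, hA, rfl⟩ := isClosed_induced_iff.mp hC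
  exact h A hA hk

structure IsClosedSectionCover {ι X V : Type*} [TopologicalSpace X] [TopologicalSpace V]
    (p : V → X) (Γ : ι → X → V) : Prop where
  continuous_proj : Continuous p
  continuous_section (i : ι) : Continuous (Γ i)
  leftInverse (i : ι) : Function.LeftInverse p (Γ i)
  isClosed_range (i : ι) : IsClosed (range (Γ i))
  iUnion_range : ⋃ i, range (Γ i) = univ

namespace IsClosedSectionCover

open IrreducibleCloseds

variable {ι X V : Type*} [TopologicalSpace X] [TopologicalSpace V] {p : V → X}
  {Γ : ι → X → V}

theorem isClosedEmbedding (hV : IsClosedSectionCover p Γ) (i : ι) : IsClosedEmbedding (Γ i) :=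
  ⟨(hV.leftInverse i).isEmbedding hV.continuous_proj (hV.continuous_section i),
    hV.isClosed_range i⟩

theorem exists_mem_range (hV : IsClosedSectionCover p Γ) (v : V) : ∃ i, v ∈ range (Γ i) :=
  mem_iUnion.mp (hV.iUnion_range ▸ mem_univ v)

theorem exists_subset_range [Finite ι] (hV : IsClosedSectionCover p Γ)
    (W : IrreducibleCloseds V) : ∃ i, (W : Set V) ⊆ range (Γ i) :=
  W.isIrreducible.exists_subset_of_subset_iUnion hV.isClosed_range
    (hV.iUnion_range ▸ subset_univ _)

theorem coe_map_section (hV : IsClosedSectionCover p Γ) (i : ι) (Z : IrreducibleCloseds X) :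
    (map (Γ i) (hV.continuous_section i) Z : Set V) = Γ i '' Z := by
  rw [coe_map, ((hV.isClosedEmbedding i).isClosedMap _ Z.isClosed).closure_eq]

theorem coe_map_proj [Finite ι] (hV : IsClosedSectionCover p Γ) (W : IrreducibleCloseds V) :
    (map p hV.continuous_proj W : Set X) = p '' W := by
  obtain ⟨i, hi⟩ := hV.exists_subset_range W
  have himage : p '' W = Γ i ⁻¹' W := by
    ext x
    refine ⟨?_, fun hx => ⟨Γ i x, hx, hV.leftInverse i x⟩⟩
    rintro ⟨v, hv, rfl⟩
    obtain ⟨y, rfl⟩ := hi hv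
    rwa [mem_preimage, hV.leftInverse i y]
  rw [coe_map, himage, (W.isClosed.preimage (hV.continuous_section i)).closure_eq]

theorem strictMono_map_proj [Finite ι] (hV : IsClosedSectionCover p Γ) :
    StrictMono (map p hV.continuous_proj) := by
  intro W W' hWW'
  obtain ⟨i, hi⟩ := hV.exists_subset_range W'
  have hinj : InjOn p (range (Γ i)) := (hV.leftInverse i).rightInvOn_range.injOn
  rw [← SetLike.coe_ssubset_coe, hV.coe_map_proj, hV.coe_map_proj,
    hinj.image_ssubset_image_iff ((SetLike.coe_subset_coe.mpr hWW'.le).trans hi) hi]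
  exact hWW'

theorem map_proj_map_section (hV : IsClosedSectionCover p Γ) (i : ι)
    (Z : IrreducibleCloseds X) :
    map p hV.continuous_proj (map (Γ i) (hV.continuous_section i) Z) = Z := by
  apply SetLike.coe_injective
  rw [coe_map, hV.coe_map_section, ← image_comp, (hV.leftInverse i).comp_eq_id, image_id,
    Z.isClosed.closure_eq]

theorem exists_map_section_map_proj [Finite ι] (hV : IsClosedSectionCover p Γ)
    (W : IrreducibleCloseds V) :
    ∃ i, map (Γ i) (hV.continuous_section i) (map p hV.continuous_proj W) = W := by
  obtain ⟨i, hi⟩ := hV.exists_subset_range W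
  refine ⟨i, SetLike.coe_injective ?_⟩
  rw [hV.coe_map_section, hV.coe_map_proj, image_image]
  refine (image_congr fun v hv => ?_).trans (image_id _)
  obtain ⟨x, rfl⟩ := hi hv
  rw [hV.leftInverse i x, id]

theorem coheight_map_section [Finite ι] (hV : IsClosedSectionCover p Γ) (i : ι)
    (Z : IrreducibleCloseds X) :
    Order.coheight (map (Γ i) (hV.continuous_section i) Z) = Order.coheight Z := by
  refine le_antisymm ?_ (Order.coheight_le_coheight_apply_of_strictMono _
    (map_strictMono_of_isInducing (hV.isClosedEmbedding i).isInducing) Z)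
  conv_rhs => rw [← hV.map_proj_map_section i Z]
  exact Order.coheight_le_coheight_apply_of_strictMono _ hV.strictMono_map_proj _

theorem codim_eq_iInf [Finite ι] (hV : IsClosedSectionCover p Γ) (B : Set V) :
    codim B = ⨅ i, codim (Γ i ⁻¹' B) := by
  refine le_antisymm (le_iInf fun i => le_iInf₂ fun Z hZ => ?_) (le_iInf₂ fun W hW => ?_)
  · refine (iInf₂_le _ ?_).trans_eq (hV.coheight_map_section i Z)
    rw [hV.coe_map_section]
    exact image_subset_iff.mpr hZ
  · obtain ⟨i, hi⟩ := hV.exists_map_section_map_proj W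
    have hcoheight := hV.coheight_map_section i (map p hV.continuous_proj W)
    rw [hi] at hcoheight
    refine (iInf_le _ i).trans ((iInf₂_le _ ?_).trans_eq hcoheight.symm)
    rw [← image_subset_iff, ← hV.coe_map_section, hi]
    exact hW

end IsClosedSectionCover

theorem Homeomorph.isClosedSectionCover {X V : Type*} [TopologicalSpace X] [TopologicalSpace V]
    (e : V ≃ₜ X) : IsClosedSectionCover e fun _ : Unit => e.symm where
  continuous_proj := e.continuous
  continuous_section _ := e.symm.continuous
  leftInverse _ := e.apply_symm_apply
  isClosed_range _ := by simp
  iUnion_range := by simp [iUnion_const]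

theorem codim_preimage_homeomorph {T T' : Type*} [TopologicalSpace T] [TopologicalSpace T']
    (e : T ≃ₜ T') (S : Set T') : codim (e ⁻¹' S) = codim S := by
  rw [e.isClosedSectionCover.codim_eq_iInf, iInf_const, ← preimage_comp, e.self_comp_symm,
    preimage_id]

theorem Subgroup.reflTransGen_of_closure_eq_top {G : Type*} [Group G] {S : Set G}
    (hS : Subgroup.closure S = ⊤) {r : G → G → Prop} (hr : ∀ {σ τ}, r σ τ → r τ σ)
    (hstep : ∀ σ, ∀ s ∈ S, r σ (σ * s)) (σ τ : G) : ReflTransGen r σ τ := by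
  suffices h : ∀ g ∈ Subgroup.closure S, ∀ σ, ReflTransGen r σ (σ * g) by
    simpa using h (σ⁻¹ * τ) (hS ▸ Subgroup.mem_top _) σ
  intro g hg
  induction hg using Subgroup.closure_induction'' with
  | mem s hs => exact fun σ => .single (hstep σ s hs)
  | inv_mem s hs => exact fun σ => .single (hr (by simpa using hstep (σ * s⁻¹) s hs))
  | one => exact fun σ => by rw [mul_one]
  | mul g h _ _ ihg ihh => exact fun σ => (ihg σ).trans (by simpa [mul_assoc] using ihh (σ * g))

/-- An abstract separating variety: `p` and `q` play the two projections to `X`, and `Γ σ x` the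
point `(x, σ • x)`. -/
structure IsActionGraph {G X V : Type*} [Group G] [MulAction G X] [TopologicalSpace X]
    [TopologicalSpace V] (p q : V → X) (Γ : G → X → V) : Prop
    extends IsClosedSectionCover p Γ where
  continuous_snd : Continuous q
  snd_section (σ : G) (x : X) : q (Γ σ x) = σ • x
  section_eq_of_smul_eq {σ τ : G} {x : X} : σ • x = τ • x → Γ σ x = Γ τ x

namespace IsActionGraph

variable {G X V : Type*} [Group G] [MulAction G X] [TopologicalSpace X] [TopologicalSpace V]
  {p q : V → X} {Γ : G → X → V}

theorem continuousConstSMul (hV : IsActionGraph p q Γ) : ContinuousConstSMul G X where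
  continuous_const_smul σ := by
    simpa [Function.comp_def, hV.snd_section] using
      hV.continuous_snd.comp (hV.continuous_section σ)

theorem preimage_section_preimage_fst (hV : IsActionGraph p q Γ) (σ : G) (A : Set X) :
    Γ σ ⁻¹' (p ⁻¹' A) = A := by
  rw [← preimage_comp, (hV.leftInverse σ).comp_eq_id, preimage_id]

theorem preimage_section_preimage_snd (hV : IsActionGraph p q Γ) (σ : G) (A : Set X) :
    Γ σ ⁻¹' (q ⁻¹' A) = (σ • ·) ⁻¹' A := by
  ext x
  simp [hV.snd_section]

theorem preimage_section_range (hV : IsActionGraph p q Γ) (σ τ : G) :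
    Γ σ ⁻¹' range (Γ τ) = fixedBy X (σ⁻¹ * τ) := by
  ext x
  rw [mem_preimage, mem_range, mem_fixedBy, mul_smul, inv_smul_eq_iff]
  refine ⟨fun ⟨y, hyx⟩ => ?_, fun h => ⟨x, hV.section_eq_of_smul_eq h⟩⟩
  obtain rfl : y = x := by simpa [hV.leftInverse σ x, hV.leftInverse τ y] using congrArg p hyx
  simpa [hV.snd_section] using congrArg q hyx

theorem isClosed_fixedBy (hV : IsActionGraph p q Γ) (σ : G) : IsClosed (fixedBy X σ) := by
  have h := (hV.isClosed_range σ).preimage (hV.continuous_section 1)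
  rwa [hV.preimage_section_range, inv_one, one_mul] at h

theorem range_inter_range_subset (hV : IsActionGraph p q Γ) (σ τ : G) :
    range (Γ σ) ∩ range (Γ τ) ⊆ p ⁻¹' fixedBy X (σ⁻¹ * τ) := by
  rintro _ ⟨⟨x, rfl⟩, hx⟩
  rw [mem_preimage, hV.leftInverse σ x, ← hV.preimage_section_range]
  exact hx

variable [Finite G]

theorem codim_preimage_fst (hV : IsActionGraph p q Γ) (A : Set X) :
    codim (p ⁻¹' A) = codim A := by
  simp only [hV.codim_eq_iInf, hV.preimage_section_preimage_fst, iInf_const]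

theorem connectedSpaceInCodim_of_closure_eq_top (hV : IsActionGraph p q Γ) {k : ℕ}
    (hX : ConnectedSpaceInCodim X k)
    (hgen : Subgroup.closure {σ : G | codim (fixedBy X σ) ≤ k} = ⊤) :
    ConnectedSpaceInCodim V k := by
  intro B hB hBcodim
  have hpiece (σ : G) : k < codim (Γ σ ⁻¹' B) :=
    hBcodim.trans_le ((hV.codim_eq_iInf B).trans_le (iInf_le _ σ))
  have hconn (σ : G) : IsConnected (range (Γ σ) \ B) := by
    rw [← image_compl_preimage]
    exact (hX _ (hB.preimage (hV.continuous_section σ)) (hpiece σ)).image _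
      (hV.continuous_section σ).continuousOn
  have hunion : Bᶜ = ⋃ σ, range (Γ σ) \ B := by
    rw [← iUnion_sdiff, hV.iUnion_range, compl_eq_univ_sdiff]
  rw [hunion]
  refine IsConnected.iUnion_of_reflTransGen hconn
    (Subgroup.reflTransGen_of_closure_eq_top hgen (fun h => by rwa [inter_comm]) ?_)
  intro σ s hs
  obtain ⟨x, hxs, hxB⟩ := not_subset.mp fun h => (hpiece σ).not_ge ((codim_anti h).trans hs)
  refine ⟨Γ σ x, ⟨mem_range_self x, hxB⟩, ?_, hxB⟩
  rw [hV.section_eq_of_smul_eq (by rw [mul_smul, (mem_fixedBy).mp hxs])]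
  exact mem_range_self x

theorem connectedSpaceInCodim (hV : IsActionGraph p q Γ) {k : ℕ}
    (h : ConnectedSpaceInCodim V k) : ConnectedSpaceInCodim X k := by
  have := hV.continuousConstSMul
  intro A hA hAcodim
  have hcodim : codim (p ⁻¹' A ∪ q ⁻¹' A) = codim A := by
    simp only [hV.codim_eq_iInf, preimage_union, hV.preimage_section_preimage_fst,
      hV.preimage_section_preimage_snd]
    refine (iInf_congr fun σ => ?_).trans iInf_const
    rw [codim_union hA (hA.preimage (continuous_const_smul σ)),
      ← codim_preimage_homeomorph (Homeomorph.smul σ) A]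
    exact min_self _
  have himage : p '' (p ⁻¹' A ∪ q ⁻¹' A)ᶜ = Aᶜ := by
    refine subset_antisymm (image_subset_iff.mpr fun v hv => fun hA => hv (.inl hA)) ?_
    intro x hx
    refine ⟨Γ 1 x, ?_, hV.leftInverse 1 x⟩
    simpa [hV.leftInverse 1 x, hV.snd_section] using hx
  rw [← himage]
  exact (h _ ((hA.preimage hV.continuous_proj).union (hA.preimage hV.continuous_snd))
    (hcodim ▸ hAcodim)).image p hV.continuous_proj.continuousOn

theorem not_isPreconnected_compl_preimage_fst (hV : IsActionGraph p q Γ) {N : Subgroup G}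
    {σ₀ : G} (hσ₀ : σ₀ ∉ N) {F : Set X} (hF : ∀ g ∉ N, fixedBy X g ⊆ F)
    (hne : (p ⁻¹' F)ᶜ.Nonempty) : ¬ IsPreconnected (p ⁻¹' F)ᶜ := by
  intro hconn
  obtain ⟨v₀, hv₀⟩ := hne
  have hmeet (σ : N) (τ : {τ // τ ∉ N}) : range (Γ σ) ∩ range (Γ τ) ⊆ p ⁻¹' F :=
    (hV.range_inter_range_subset σ τ).trans <| preimage_mono <| hF _ fun h =>
      τ.2 (by simpa using mul_mem σ.2 h)
  have hcover : (p ⁻¹' F)ᶜ ⊆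
      (⋃ σ : N, range (Γ σ)) ∪ ⋃ τ : {τ // τ ∉ N}, range (Γ τ) := by
    intro v _
    obtain ⟨σ, hσ⟩ := hV.exists_mem_range v
    by_cases h : σ ∈ N
    · exact .inl (mem_iUnion.mpr ⟨⟨σ, h⟩, hσ⟩)
    · exact .inr (mem_iUnion.mpr ⟨⟨σ, h⟩, hσ⟩)
  have hoff (σ : G) : Γ σ (p v₀) ∈ (p ⁻¹' F)ᶜ := by
    rwa [mem_compl_iff, mem_preimage, hV.leftInverse]
  obtain ⟨w, hwF, hwN, hwN'⟩ := isPreconnected_closed_iff.mp hconn _ _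
    (isClosed_iUnion_of_finite fun σ => hV.isClosed_range _)
    (isClosed_iUnion_of_finite fun τ => hV.isClosed_range _) hcover
    ⟨_, hoff 1, mem_iUnion.mpr ⟨1, mem_range_self _⟩⟩
    ⟨_, hoff σ₀, mem_iUnion.mpr ⟨⟨σ₀, hσ₀⟩, mem_range_self _⟩⟩
  obtain ⟨σ, hσ⟩ := mem_iUnion.mp hwN
  obtain ⟨τ, hτ⟩ := mem_iUnion.mp hwN'
  exact hwF (hmeet σ τ ⟨hσ, hτ⟩)

theorem closure_eq_top (hV : IsActionGraph p q Γ) {k : ℕ} (h : ConnectedSpaceInCodim V k) :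
    Subgroup.closure {σ : G | codim (fixedBy X σ) ≤ k} = ⊤ := by
  set N := Subgroup.closure {σ : G | codim (fixedBy X σ) ≤ k}
  by_contra hN
  obtain ⟨σ₀, hσ₀⟩ : ∃ σ, σ ∉ N := by simpa [Subgroup.eq_top_iff'] using hN
  set F := ⋃ g : {g // g ∉ N}, fixedBy X (g : G) with hF
  have hFcodim : k < codim F := by
    have : Nonempty {g // g ∉ N} := ⟨⟨σ₀, hσ₀⟩⟩
    obtain ⟨g, hg⟩ := ENat.exists_eq_iInf fun g : {g // g ∉ N} => codim (fixedBy X (g : G))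
    rw [hF, codim_iUnion fun g : {g // g ∉ N} => hV.isClosed_fixedBy (g : G), ← hg]
    exact not_le.mp fun hle => g.2 (Subgroup.subset_closure hle)
  have hconn := h _ ((isClosed_iUnion_of_finite fun g => hV.isClosed_fixedBy _).preimage
    hV.continuous_proj) (by rwa [hV.codim_preimage_fst])
  exact hV.not_isPreconnected_compl_preimage_fst hσ₀
    (fun g hg => subset_iUnion_of_subset ⟨g, hg⟩ subset_rfl) hconn.nonempty hconn.isPreconnected

theorem connectedSpaceInCodim_iff (hV : IsActionGraph p q Γ) (k : ℕ) :
    ConnectedSpaceInCodim V k ↔ ConnectedSpaceInCodim X k ∧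
      Subgroup.closure {σ : G | codim (fixedBy X σ) ≤ k} = ⊤ :=
  ⟨fun h => ⟨hV.connectedSpaceInCodim h, hV.closure_eq_top h⟩,
    fun h => hV.connectedSpaceInCodim_of_closure_eq_top h.1 h.2⟩

end IsActionGraph
open MvPolynomial

section Zariski

variable {σ τ : Type*}

theorem isClosed_zeroLocus (I : Ideal (MvPolynomial σ K)) :
    IsClosed (zeroLocus K I : Set (σ → K)) :=
  isOpen_compl_iff.mp (isOpen_generateFrom_of_mem ⟨I, rfl⟩)

theorem isClosed_setOf_eval_eq (f g : MvPolynomial σ K) :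
    IsClosed {x : σ → K | eval x f = eval x g} := by
  convert isClosed_zeroLocus (Ideal.span {f - g}) using 1
  ext x
  simp [zeroLocus_span, sub_eq_zero]

theorem eval_bind₁ (x : σ → K) (P : τ → MvPolynomial σ K) (f : MvPolynomial τ K) :
    eval x (bind₁ P f) = eval (fun j => eval x (P j)) f := by
  simpa using aeval_bind₁ x P f

theorem continuous_polynomialMap (P : τ → MvPolynomial σ K) :
    Continuous fun (x : σ → K) (j : τ) => eval x (P j) := by
  refine continuous_generateFrom_iff.mpr ?_
  rintro _ ⟨I, rfl⟩
  rw [preimage_compl, isOpen_compl_iff]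
  convert isClosed_zeroLocus (Ideal.span (bind₁ P '' I)) using 1
  ext x
  simp [zeroLocus_span, eval_bind₁]

theorem continuous_precomp (f : τ → σ) : Continuous fun x : σ → K => x ∘ f := by
  simpa [Function.comp_def] using continuous_polynomialMap (K := K) fun j => X (f j)

theorem exists_eval_eq_zero_and_eq_one {ι : Type*} [Fintype ι] {x : σ → K}
    {t : ι → σ → K} (ht : ∀ i, t i ≠ x) :
    ∃ q : MvPolynomial σ K, eval x q = 0 ∧ ∀ i, eval (t i) q = 1 := by
  have hℓ (i : ι) : ∃ ℓ : MvPolynomial σ K, eval x ℓ = 0 ∧ eval (t i) ℓ = 1 := by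
    obtain ⟨j, hj⟩ := Function.ne_iff.mp (ht i)
    exact ⟨C (t i j - x j)⁻¹ * (X j - C (x j)), by simp, by simp [sub_ne_zero.mpr hj]⟩
  choose ℓ hℓx hℓt using hℓ
  refine ⟨1 - ∏ i, (1 - ℓ i), by simp [hℓx], fun i => ?_⟩
  simpa using Finset.prod_eq_zero (Finset.mem_univ i) (by simp [hℓt i])

end Zariski

section SeparatingVariety

variable {G} {X : Set (Fin m → K)} [MulAction G X]

theorem IsRegularAction.exists_polynomials (hact : IsRegularAction G X) (σ : G) :
    ∃ P : Fin m → MvPolynomial (Fin m) K,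
      ∀ x : X, ((σ • x : X) : Fin m → K) = fun i => eval (x : Fin m → K) (P i) := by
  choose P hP using hact σ
  exact ⟨P, fun x => funext fun i => hP i x⟩

theorem IsRegularAction.isRegularFn_prod_eval_smul [Fintype G] (hact : IsRegularAction G X)
    (q : MvPolynomial (Fin m) K) :
    IsRegularFn X fun x => ∏ σ : G, eval ((σ • x : X) : Fin m → K) q := by
  choose P hP using hact.exists_polynomials
  refine ⟨∏ σ, bind₁ (P σ) q, fun x => ?_⟩
  simp only [map_prod, eval_bind₁, hP]

theorem isInvariantFn_prod_eval_smul [Fintype G] (q : MvPolynomial (Fin m) K) :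
    IsInvariantFn G X fun x => ∏ σ : G, eval ((σ • x : X) : Fin m → K) q := fun τ x => by
  simp only [smul_smul]
  exact Fintype.prod_equiv (Equiv.mulRight τ) _ _ fun σ => rfl

theorem IsRegularAction.exists_smul_eq [Finite G] (hact : IsRegularAction G X) {x y : X}
    (h : ∀ f : X → K, IsRegularFn X f → IsInvariantFn G X f → f x = f y) :
    ∃ σ : G, σ • x = y := by
  cases nonempty_fintype G
  by_contra! hxy
  obtain ⟨q, hqx, hqy⟩ := exists_eval_eq_zero_and_eq_one (x := (x : Fin m → K))
    (t := fun σ : G => ((σ • y : X) : Fin m → K)) fun σ hσ =>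
      hxy σ⁻¹ (inv_smul_eq_iff.mpr (Subtype.ext hσ).symm)
  have hx : ∏ σ : G, eval ((σ • x : X) : Fin m → K) q = 0 :=
    Finset.prod_eq_zero (Finset.mem_univ 1) (by rwa [one_smul])
  have hy : ∏ σ : G, eval ((σ • y : X) : Fin m → K) q = 1 :=
    Finset.prod_eq_one fun σ _ => hqy σ
  exact zero_ne_one <| hx.symm.trans <|
    (h _ (hact.isRegularFn_prod_eval_smul q) (isInvariantFn_prod_eval_smul q)).trans hy

def sepFst (v : sepVariety G X) : X :=
  ⟨(v : (Fin m ⊕ Fin m) → K) ∘ Sum.inl, by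
    obtain ⟨x, y, hv, -⟩ := v.2
    rw [hv]
    exact x.2⟩

def sepSnd (v : sepVariety G X) : X :=
  ⟨(v : (Fin m ⊕ Fin m) → K) ∘ Sum.inr, by
    obtain ⟨x, y, hv, -⟩ := v.2
    rw [hv]
    exact y.2⟩

def sepGraph (σ : G) (x : X) : sepVariety G X :=
  ⟨Sum.elim x (σ • x : X), x, σ • x, rfl, fun _ _ hf => (hf σ x).symm⟩

theorem continuous_sepGraph (hact : IsRegularAction G X) (σ : G) :
    Continuous (sepGraph (X := X) σ) := by
  obtain ⟨P, hP⟩ := hact.exists_polynomials σ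
  have h : (fun x : X => Sum.elim (x : Fin m → K) (σ • x : X)) =
      (fun (v : Fin m → K) j => eval v (Sum.elim MvPolynomial.X P j)) ∘ Subtype.val := by
    ext x (i | i) <;> simp [hP]
  exact Continuous.subtype_mk (h ▸ (continuous_polynomialMap _).comp continuous_subtype_val) _

theorem isClosed_range_sepGraph (hact : IsRegularAction G X) (σ : G) :
    IsClosed (range (sepGraph (X := X) σ)) := by
  obtain ⟨P, hP⟩ := hact.exists_polynomials σ
  have h : range (sepGraph (X := X) σ) = Subtype.val ⁻¹'
      ⋂ i, {z | eval z (MvPolynomial.X (Sum.inr i)) = eval z (rename Sum.inl (P i))} := by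
    ext v
    simp only [mem_range, mem_preimage, mem_iInter, mem_ofPred, eval_X, eval_rename]
    refine ⟨?_, fun hv => ⟨sepFst v, Subtype.ext (funext ?_)⟩⟩
    · rintro ⟨x, rfl⟩ i
      show ((σ • x : X) : Fin m → K) i = eval (x : Fin m → K) (P i)
      rw [hP]
    · rintro (i | i)
      · rfl
      · show ((σ • sepFst v : X) : Fin m → K) i = _
        rw [hP, hv]
        rfl
  rw [h]
  exact (isClosed_iInter fun i => isClosed_setOf_eval_eq _ _).preimage continuous_subtype_val

theorem isActionGraph_sepVariety [Finite G] (hact : IsRegularAction G X) :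
    IsActionGraph (sepFst (X := X)) sepSnd (sepGraph (G := G)) where
  continuous_proj := ((continuous_precomp _).comp continuous_subtype_val).subtype_mk _
  continuous_section := continuous_sepGraph hact
  leftInverse _ _ := rfl
  isClosed_range := isClosed_range_sepGraph hact
  iUnion_range := by
    refine eq_univ_of_forall fun v => mem_iUnion.mpr ?_
    obtain ⟨x, y, hv, hxy⟩ := v.2
    obtain ⟨σ, rfl⟩ := hact.exists_smul_eq hxy
    exact ⟨σ, x, Subtype.ext hv.symm⟩
  continuous_snd := ((continuous_precomp _).comp continuous_subtype_val).subtype_mk _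
  snd_section _ _ := rfl
  section_eq_of_smul_eq h := by simp [sepGraph, h]

end SeparatingVariety

theorem preimage_val_fixedPts {K : Type*} {m : ℕ} {G : Type*} [Group G] {X : Set (Fin m → K)}
    [MulAction G X] (σ : G) : Subtype.val ⁻¹' fixedPts G X σ = fixedBy X σ :=
  ext fun x => ⟨fun ⟨_, h⟩ => h, fun h => ⟨x.2, h⟩⟩

theorem sepVariety_connectedInCodim_iff_general {K : Type*} [Field K] {m : ℕ}
    (X : Set (Fin m → K))
    (G : Type*) [Group G] [Finite G] [MulAction G ↥X] (hact : IsRegularAction G X)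
    (k : ℕ) :
    ConnectedInCodim (sepVariety G X) (k : ℕ∞) ↔
      (ConnectedInCodim X (k : ℕ∞) ∧
        Subgroup.closure {σ : G | codimIn X (fixedPts G X σ) ≤ (k : ℕ∞)} = ⊤) := by
  simp only [connectedInCodim_iff, codimIn_eq_codim, preimage_val_fixedPts]
  exact (isActionGraph_sepVariety hact).connectedSpaceInCodim_iff k

/-- The separating variety is connected in codimension `k` if and only if `X`
is connected in codimension `k` and `G` is generated by `k`-reflections. -/
theorem sepVariety_connectedInCodim_iff {K : Type*} [Field K] [IsAlgClosed K] {m : ℕ}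
    (X : Set (Fin m → K)) (hX : IsClosed X)
    (G : Type*) [Group G] [Finite G] [MulAction G ↥X] (hact : IsRegularAction G X)
    (k : ℕ) :
    ConnectedInCodim (sepVariety G X) (k : ℕ∞) ↔
      (ConnectedInCodim X (k : ℕ∞) ∧
        Subgroup.closure {σ : G | codimIn X (fixedPts G X σ) ≤ (k : ℕ∞)} = ⊤) :=
  sepVariety_connectedInCodim_iff_general X G hact k
end

section
/- The separating variety V_sep is connected if and only if X is connected and G is generated by elements having a fixed point in X. -/
/-!
For finite `G` the invariants separate orbits: a polynomial vanishing at `x` and equal to `1` on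
the orbit of `y` has a product over `G` of translates that is invariant and separates `x` from `y`.
Hence `V_sep` is the finite union of the graphs `H_σ = {(x, σx)}`, each closed in `V_sep` and
connected when `X` is. Two graphs `H_σ` and `H_τ` meet exactly when `σ⁻¹τ` has a fixed point, so
`V_sep` is connected iff the Cayley graph of `G` with respect to the elements having a fixed point
is connected, i.e. iff these elements generate `G`. Connectedness of `X` follows from that of
`V_sep` through the first projection.
-/

open TopologicalSpace

variable {K : Type*} [Field K]

variable {m : ℕ}

variable (G : Type*) [Group G]

section Topology

variable {α : Type*} [TopologicalSpace α]

theorem IsPreconnected.transGen_of_finite_closed_cover {ι : Type*} [Finite ι] {S : Set α}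
    {s : ι → Set α} (hS : IsPreconnected S) (hcover : S ⊆ ⋃ i, s i)
    (hs : ∀ i, ∃ Z, IsClosed Z ∧ s i = S ∩ Z) {i j : ι} (hi : (s i).Nonempty)
    (hj : (s j).Nonempty) : Relation.TransGen (fun a b ↦ (s a ∩ s b).Nonempty) i j := by
  choose Z hZ hsZ using hs
  obtain rfl : s = fun i ↦ S ∩ Z i := funext hsZ
  by_contra hij
  set R : Set ι := {k | Relation.TransGen (fun a b ↦ ((S ∩ Z a) ∩ (S ∩ Z b)).Nonempty) i k}
  have hclosed (P : Set ι) : IsClosed (⋃ k ∈ P, Z k) :=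
    (Set.toFinite P).isClosed_biUnion fun k _ ↦ hZ k
  have hsplit : S ⊆ (⋃ k ∈ R, Z k) ∪ ⋃ k ∈ Rᶜ, Z k := by
    intro z hz
    obtain ⟨k, -, hzk⟩ := Set.mem_iUnion.1 (hcover hz)
    by_cases hkR : k ∈ R
    · exact Or.inl (Set.mem_biUnion hkR hzk)
    · exact Or.inr (Set.mem_biUnion hkR hzk)
  obtain ⟨a, ha⟩ := hi
  obtain ⟨b, hb⟩ := hj
  have hiR : i ∈ R := .single ⟨a, ha, ha⟩
  obtain ⟨z, hzS, hzR, hzRc⟩ := isPreconnected_closed_iff.1 hS _ _ (hclosed R) (hclosed Rᶜ)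
    hsplit ⟨a, ha.1, Set.mem_biUnion hiR ha.2⟩ ⟨b, hb.1, Set.mem_biUnion hij hb.2⟩
  obtain ⟨k, hkR, hzk⟩ := Set.mem_iUnion₂.1 hzR
  obtain ⟨l, hlR, hzl⟩ := Set.mem_iUnion₂.1 hzRc
  exact hlR (hkR.tail ⟨z, ⟨hzS, hzk⟩, ⟨hzS, hzl⟩⟩)

end Topology

namespace Subgroup

variable {H : Type*} [Group H] {F : Set H}

theorem reflTransGen_iff_inv_mul_mem_closure (hF : ∀ s ∈ F, s⁻¹ ∈ F) {a b : H} :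
    Relation.ReflTransGen (fun a b ↦ a⁻¹ * b ∈ F) a b ↔ a⁻¹ * b ∈ closure F := by
  constructor
  · intro h
    induction h with
    | refl => simp
    | tail _ hcd ih =>
      simpa [mul_assoc] using mul_mem ih (subset_closure hcd)
  · intro h
    suffices key : ∀ g ∈ closure F, ∀ a : H,
        Relation.ReflTransGen (fun a b ↦ a⁻¹ * b ∈ F) a (a * g) by
      simpa using key _ h a
    intro g hg
    induction hg using closure_induction_left with
    | one => simpa using fun a ↦ .refl
    | mul_left s hs g _ ih =>
      exact fun a ↦ .head (b := a * s) (by simpa using hs) (by simpa [mul_assoc] using ih (a * s))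
    | inv_mul_cancel s hs g _ ih =>
      exact fun a ↦ .head (b := a * s⁻¹) (by simpa using hF s hs)
        (by simpa [mul_assoc] using ih (a * s⁻¹))

end Subgroup

namespace MvPolynomial

variable {α β : Type*}

theorem isClosed_setOf_forall_eval_eq_zero {ι : Type*} (q : ι → MvPolynomial α K) :
    IsClosed {x : α → K | ∀ i, eval x (q i) = 0} := by
  have hzero : {x : α → K | ∀ i, eval x (q i) = 0} = zeroLocus K (Ideal.span (Set.range q)) := by
    ext x
    simp only [mem_zeroLocus_iff, aeval_eq_eval, Set.mem_ofPred_eq]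
    change (∀ i, q i ∈ RingHom.ker (eval x)) ↔ Ideal.span (Set.range q) ≤ RingHom.ker (eval x)
    rw [Ideal.span_le, Set.range_subset_iff]
    rfl
  rw [hzero, ← isOpen_compl_iff]
  exact isOpen_generateFrom_of_mem ⟨_, rfl⟩

theorem continuous_eval_polys (P : β → MvPolynomial α K) :
    Continuous fun (x : α → K) j ↦ eval x (P j) := by
  refine continuous_generateFrom_iff.2 ?_
  rintro _ ⟨I, rfl⟩
  have hpre : (fun (x : α → K) j ↦ eval x (P j)) ⁻¹' zeroLocus K I
      = {x | ∀ f : I, eval x (bind₁ P f) = 0} := by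
    ext x
    simp [mem_zeroLocus_iff, ← aeval_eq_eval, aeval_bind₁]
  rw [Set.preimage_compl, hpre]
  exact (isClosed_setOf_forall_eval_eq_zero _).isOpen_compl

theorem exists_eval_eq_zero_and_eval_eq_one {ι : Type*} [Fintype ι] {x : α → K}
    {b : ι → α → K} (hb : ∀ i, b i ≠ x) :
    ∃ p : MvPolynomial α K, eval x p = 0 ∧ ∀ i, eval (b i) p = 1 := by
  have hpair (i : ι) : ∃ d : MvPolynomial α K, eval x d = 0 ∧ eval (b i) d = 1 := by
    obtain ⟨k, hk⟩ := Function.ne_iff.1 (hb i)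
    exact ⟨C (b i k - x k)⁻¹ * (MvPolynomial.X k - C (x k)), by simp,
      by simp [inv_mul_cancel₀ (sub_ne_zero.2 hk)]⟩
  choose d hd0 hd1 using hpair
  refine ⟨1 - ∏ i, (1 - d i), by simp [hd0], fun j ↦ ?_⟩
  have hvanish : ∏ i, (1 - eval (b j) (d i)) = 0 :=
    Finset.prod_eq_zero (Finset.mem_univ j) (by simp [hd1])
  simp [hvanish]

end MvPolynomial

section GraphComp

open MvPolynomial

variable {G} {X : Set (Fin m → K)} [MulAction G ↥X]

theorem IsRegularAction.exists_eval_polys (hact : IsRegularAction G X) (σ : G) :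
    ∃ P : Fin m → MvPolynomial (Fin m) K,
      ∀ x : ↥X, ((σ • x : ↥X) : Fin m → K) = fun i ↦ eval (x : Fin m → K) (P i) := by
  choose P hP using hact σ
  exact ⟨P, fun x ↦ funext fun i ↦ hP i x⟩

theorem continuous_sumElim_smul (hact : IsRegularAction G X) (σ : G) :
    Continuous fun x : ↥X ↦ Sum.elim (x : Fin m → K) ((σ • x : ↥X) : Fin m → K) := by
  obtain ⟨P, hP⟩ := hact.exists_eval_polys σ
  convert (continuous_eval_polys (Sum.elim MvPolynomial.X P)).comp continuous_subtype_val using 1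
  ext x (i | i) <;> simp [hP]

theorem continuous_comp_inl :
    Continuous fun z : (Fin m ⊕ Fin m) → K ↦ z ∘ Sum.inl := by
  convert continuous_eval_polys
    fun i : Fin m ↦ (MvPolynomial.X (Sum.inl i) : MvPolynomial (Fin m ⊕ Fin m) K)
  simp

omit [Field K] in
theorem graphComp_self_eq_range (σ : G) :
    graphComp G X σ X =
      Set.range fun x : ↥X ↦ Sum.elim (x : Fin m → K) ((σ • x : ↥X) : Fin m → K) := by
  ext z
  exact ⟨fun ⟨x, _, hz⟩ ↦ ⟨x, hz.symm⟩, fun ⟨x, hz⟩ ↦ ⟨x, x.2, hz.symm⟩⟩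

theorem isConnected_graphComp (hact : IsRegularAction G X) (hX : IsConnected X) (σ : G) :
    IsConnected (graphComp G X σ X) := by
  have : ConnectedSpace ↥X := isConnected_iff_connectedSpace.1 hX
  rw [graphComp_self_eq_range]
  exact isConnected_range (continuous_sumElim_smul hact σ)

theorem graphComp_subset_sepVariety (σ : G) : graphComp G X σ X ⊆ sepVariety G X := by
  rintro _ ⟨x, -, rfl⟩
  exact ⟨x, σ • x, rfl, fun f _ hf ↦ (hf σ x).symm⟩

theorem exists_isClosed_sepVariety_inter_eq_graphComp (hact : IsRegularAction G X) (σ : G) :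
    ∃ Z, IsClosed Z ∧ graphComp G X σ X = sepVariety G X ∩ Z := by
  obtain ⟨P, hP⟩ := hact.exists_eval_polys σ
  refine ⟨_, isClosed_setOf_forall_eval_eq_zero
    fun i ↦ MvPolynomial.X (Sum.inr i) - rename Sum.inl (P i), ?_⟩
  ext z
  simp only [Set.mem_inter_iff, Set.mem_ofPred_eq, map_sub, eval_X, eval_rename, sub_eq_zero]
  constructor
  · rintro ⟨x, -, rfl⟩
    exact ⟨graphComp_subset_sepVariety σ ⟨x, x.2, rfl⟩, fun i ↦ by simp [hP]⟩
  · rintro ⟨⟨x, y, rfl, -⟩, hz⟩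
    refine ⟨x, x.2, ?_⟩
    congr 1
    ext i
    simpa [hP, Function.comp_def] using hz i

omit [Field K] in
theorem graphComp_inter_nonempty_iff {σ τ : G} :
    (graphComp G X σ X ∩ graphComp G X τ X).Nonempty ↔ ∃ x : ↥X, (σ⁻¹ * τ) • x = x := by
  simp only [mul_smul, inv_smul_eq_iff, graphComp_self_eq_range, Set.Nonempty, Set.mem_inter_iff,
    Set.mem_range]
  constructor
  · rintro ⟨_, ⟨x, rfl⟩, ⟨y, hyx⟩⟩
    obtain ⟨hyx, hστ⟩ := Sum.elim_eq_iff.1 hyx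
    obtain rfl : y = x := Subtype.ext hyx
    exact ⟨y, Subtype.ext hστ⟩
  · rintro ⟨x, hx⟩
    exact ⟨_, ⟨x, rfl⟩, ⟨x, by rw [hx]⟩⟩

theorem image_comp_inl_sepVariety : (fun z ↦ z ∘ Sum.inl) '' sepVariety G X = X := by
  apply subset_antisymm
  · rintro _ ⟨_, ⟨x, y, rfl, -⟩, rfl⟩
    exact x.2
  · intro x hx
    exact ⟨Sum.elim x x, ⟨⟨x, hx⟩, ⟨x, hx⟩, rfl, fun _ _ _ ↦ rfl⟩, rfl⟩

theorem exists_isInvariantFn_ne [Finite G] (hact : IsRegularAction G X) {x y : ↥X}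
    (h : ∀ σ : G, σ • y ≠ x) :
    ∃ f : ↥X → K, IsRegularFn X f ∧ IsInvariantFn G X f ∧ f x ≠ f y := by
  cases nonempty_fintype G
  choose P hP using hact.exists_eval_polys
  obtain ⟨q, hqx, hqy⟩ := exists_eval_eq_zero_and_eval_eq_one
    (b := fun σ : G ↦ ((σ • y : ↥X) : Fin m → K)) fun σ ↦ Subtype.coe_ne_coe.2 (h σ)
  refine ⟨fun z ↦ ∏ σ : G, eval ((σ • z : ↥X) : Fin m → K) q,
    ⟨∏ σ, bind₁ (P σ) q, fun z ↦ ?_⟩, fun τ z ↦ ?_, ?_⟩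
  · simp [hP, ← aeval_eq_eval, aeval_bind₁]
  · exact Fintype.prod_equiv (Equiv.mulRight τ) _ _ fun σ ↦ by simp [mul_smul]
  · simp only [hqy, Finset.prod_const_one]
    rw [Finset.prod_eq_zero (Finset.mem_univ 1) (by simpa using hqx)]
    exact zero_ne_one

theorem sepVariety_eq_iUnion_graphComp [Finite G] (hact : IsRegularAction G X) :
    sepVariety G X = ⋃ σ : G, graphComp G X σ X := by
  refine subset_antisymm ?_ (Set.iUnion_subset graphComp_subset_sepVariety)
  rintro _ ⟨x, y, rfl, hxy⟩
  by_contra hnot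
  have horbit : ∀ σ : G, σ • x ≠ y := fun σ hσ ↦ hnot (Set.mem_iUnion.2 ⟨σ, x, x.2, by rw [hσ]⟩)
  obtain ⟨f, hreg, hinv, hne⟩ := exists_isInvariantFn_ne hact horbit
  exact hne (hxy f hreg hinv).symm

end GraphComp

theorem sepVariety_connected_iff_general {K : Type*} [Field K] {m : ℕ}
    (X : Set (Fin m → K))
    (G : Type*) [Group G] [Finite G] [MulAction G ↥X] (hact : IsRegularAction G X) :
    IsConnected (sepVariety G X) ↔
      (IsConnected X ∧ Subgroup.closure {σ : G | ∃ x : ↥X, σ • x = x} = ⊤) := by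
  have hinv : ∀ σ ∈ {σ : G | ∃ x : ↥X, σ • x = x}, σ⁻¹ ∈ {σ : G | ∃ x : ↥X, σ • x = x} :=
    fun σ ⟨x, hx⟩ ↦ ⟨x, inv_smul_eq_iff.2 hx.symm⟩
  have hcover := sepVariety_eq_iUnion_graphComp hact
  constructor
  · intro hV
    have hX : IsConnected X := by
      rw [← image_comp_inl_sepVariety (G := G) (X := X)]
      exact hV.image _ continuous_comp_inl.continuousOn
    obtain ⟨x⟩ := hX.nonempty.to_subtype
    have hne (σ : G) : (graphComp G X σ X).Nonempty := ⟨_, x, x.2, rfl⟩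
    refine ⟨hX, eq_top_iff.2 fun τ _ ↦ ?_⟩
    have hchain := hV.isPreconnected.transGen_of_finite_closed_cover hcover.subset
      (exists_isClosed_sepVariety_inter_eq_graphComp hact) (hne 1) (hne τ)
    simpa using (Subgroup.reflTransGen_iff_inv_mul_mem_closure hinv).1 <|
      Relation.ReflTransGen.mono (fun _ _ ↦ graphComp_inter_nonempty_iff.1) _ _
        hchain.to_reflTransGen
  · rintro ⟨hX, hgen⟩
    rw [hcover]
    refine IsConnected.iUnion_of_reflTransGen (isConnected_graphComp hact hX) fun σ τ ↦ ?_
    refine Relation.ReflTransGen.mono (fun _ _ ↦ graphComp_inter_nonempty_iff.2) _ _ ?_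
    exact (Subgroup.reflTransGen_iff_inv_mul_mem_closure hinv).2 (hgen ▸ Subgroup.mem_top _)

/-- The separating variety is connected if and only if `X` is connected and `G`
is generated by elements having a fixed point in `X`. -/
theorem sepVariety_connected_iff {K : Type*} [Field K] [IsAlgClosed K] {m : ℕ}
    (X : Set (Fin m → K)) (hX : IsClosed X)
    (G : Type*) [Group G] [Finite G] [MulAction G ↥X] (hact : IsRegularAction G X) :
    IsConnected (sepVariety G X) ↔
      (IsConnected X ∧ Subgroup.closure {σ : G | ∃ x : ↥X, σ • x = x} = ⊤) :=
  sepVariety_connected_iff_general X G hact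
end
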